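/- arXiv:2104.08594 — 6 statements merged into one kernel-verified Lean document; each statement's English description precedes it below -/
import Mathlib

section
/- Let m = k+1 and let f be a committee rule that is strategyproof and proportional. Suppose that P is a profile in which some singleton ballot {c} appears at least n/k times, and in which no voter other than those submitting {c} approves c. Then c ∈ f(P). -/
open scoped Classical

/-!
Common framework: candidates are `Fin m`, voters are `Fin n`, committee size `k`.
An approval ballot is a nonempty proper subset of the candidate set.
"at least n/k voters" is encoded as `n ≤ k * (number of such voters)`,
and "strictly more than n/(k+1) voters" as `n < (k+1) * (number of such voters)`.
-/

/-- A valid approval ballot: a nonempty proper subset of the candidate set. -/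
def ValidBallot (m : ℕ) (A : Finset (Fin m)) : Prop :=
  A.Nonempty ∧ A ≠ Finset.univ

/-- A valid profile: every voter submits a valid ballot, and the ballots jointly
approve at least `k` candidates (so the committee can be filled with approved candidates). -/
def ValidProfile (m n k : ℕ) (P : Fin n → Finset (Fin m)) : Prop :=
  (∀ i, ValidBallot m (P i)) ∧ k ≤ (Finset.univ.biUnion P).card

/-- `f` is an (approval-based) committee rule: on every valid profile it returns a
committee of cardinality `k`. -/
def IsCommitteeRule (m n k : ℕ) (f : (Fin n → Finset (Fin m)) → Finset (Fin m)) : Prop :=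
  ∀ P, ValidProfile m n k P → (f P).card = k

/-- `P'` is an `i`-variant of `P`: they agree on all voters other than `i`. -/
def IVariant {m n : ℕ} (P P' : Fin n → Finset (Fin m)) (i : Fin n) : Prop :=
  ∀ j, j ≠ i → P' j = P j

/-- Strategyproofness: a voter reporting a proper subset of her truthful ballot never
obtains a committee whose intersection with her truthful ballot strictly grows. -/
def Strategyproof (m n k : ℕ) (f : (Fin n → Finset (Fin m)) → Finset (Fin m)) : Prop :=
  ∀ P P' (i : Fin n), ValidProfile m n k P → ValidProfile m n k P' →
    IVariant P P' i → P' i ⊂ P i → ¬ (f P ∩ P i ⊂ f P' ∩ P i)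

/-- Superset-strategyproofness: no i-variant (with arbitrary new ballot) yields a
committee whose intersection with the truthful ballot strictly grows. -/
def SupersetStrategyproof (m n k : ℕ) (f : (Fin n → Finset (Fin m)) → Finset (Fin m)) : Prop :=
  ∀ P P' (i : Fin n), ValidProfile m n k P → ValidProfile m n k P' →
    IVariant P P' i → ¬ (f P ∩ P i ⊂ f P' ∩ P i)

/-- Cardinality-strategyproofness: no i-variant yields a committee containing strictly
more of the truthfully approved candidates. -/
def CardinalityStrategyproof (m n k : ℕ) (f : (Fin n → Finset (Fin m)) → Finset (Fin m)) : Prop :=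
  ∀ P P' (i : Fin n), ValidProfile m n k P → ValidProfile m n k P' →
    IVariant P P' i → ¬ ((f P ∩ P i).card < (f P' ∩ P i).card)

/-- Hamming-strategyproofness: no i-variant yields a committee at strictly smaller
Hamming distance (cardinality of the symmetric difference) from the truthful ballot. -/
def HammingStrategyproof (m n k : ℕ) (f : (Fin n → Finset (Fin m)) → Finset (Fin m)) : Prop :=
  ∀ P P' (i : Fin n), ValidProfile m n k P → ValidProfile m n k P' →
    IVariant P P' i → ¬ ((symmDiff (f P') (P i)).card < (symmDiff (f P) (P i)).card)

/-- A party-list profile: any two ballots are either equal or disjoint. -/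
def PartyList {m n : ℕ} (P : Fin n → Finset (Fin m)) : Prop :=
  ∀ i j, P i = P j ∨ Disjoint (P i) (P j)

/-- Proportionality: in a party-list profile where some singleton ballot `{c}` is
submitted by at least `n/k` voters, `c` is elected. -/
def Proportional (m n k : ℕ) (f : (Fin n → Finset (Fin m)) → Finset (Fin m)) : Prop :=
  ∀ P, ValidProfile m n k P → PartyList P →
    ∀ c : Fin m, n ≤ k * (Finset.univ.filter (fun i => P i = {c})).card → c ∈ f P

/-- Droop proportionality: in ANY profile where some singleton ballot `{c}` is submitted
by strictly more than `n/(k+1)` voters, `c` is elected. -/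
def DroopProportional (m n k : ℕ) (f : (Fin n → Finset (Fin m)) → Finset (Fin m)) : Prop :=
  ∀ P, ValidProfile m n k P →
    ∀ c : Fin m, n < (k + 1) * (Finset.univ.filter (fun i => P i = {c})).card → c ∈ f P

/-- Justified representation on party lists: in a party-list profile where some ballot `A`
is submitted by at least `n/k` voters, the committee intersects `A`. -/
def JROnPartyLists (m n k : ℕ) (f : (Fin n → Finset (Fin m)) → Finset (Fin m)) : Prop :=
  ∀ P, ValidProfile m n k P → PartyList P →
    ∀ A : Finset (Fin m), n ≤ k * (Finset.univ.filter (fun i => P i = A)).card →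
      (f P ∩ A).Nonempty

/-- Justified representation: every group of at least `n/k` voters that jointly approve
some common candidate is represented by at least one committee member approved by a
group member. -/
def JR (m n k : ℕ) (f : (Fin n → Finset (Fin m)) → Finset (Fin m)) : Prop :=
  ∀ P, ValidProfile m n k P → ∀ N' : Finset (Fin n),
    n ≤ k * N'.card → (∃ c : Fin m, ∀ i ∈ N', c ∈ P i) →
    (f P ∩ N'.biUnion P).Nonempty

/-- Disjoint diversity: in a party-list profile with at most `k` distinct parties,
the committee contains a member of each party. -/
def DisjointDiversity (m n k : ℕ) (f : (Fin n → Finset (Fin m)) → Finset (Fin m)) : Prop :=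
  ∀ P, ValidProfile m n k P → PartyList P →
    (Finset.univ.image P).card ≤ k → ∀ i : Fin n, (f P ∩ P i).Nonempty

/-- Weak efficiency: a candidate approved by no voter is never elected
(on profiles where the committee can be filled with approved candidates). -/
def WeakEfficiency (m n k : ℕ) (f : (Fin n → Finset (Fin m)) → Finset (Fin m)) : Prop :=
  ∀ P, ValidProfile m n k P → ∀ c : Fin m, (∀ i, c ∉ P i) → c ∉ f P

/-- The approval score of candidate `c`: the number of voters approving `c`. -/
def avScore (m n : ℕ) (P : Fin n → Finset (Fin m)) (c : Fin m) : ℕ :=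
  (Finset.univ.filter (fun i => c ∈ P i)).card

/-- `W` is the committee selected by Approval Voting with lexicographic tie-breaking:
it has size `k`, and every member beats every non-member, either by a strictly higher
approval score or by equal score and smaller index (lexicographic tie-breaking with
respect to the fixed linear order on the candidates `Fin m`). -/
def IsAVCommittee (m n k : ℕ) (P : Fin n → Finset (Fin m)) (W : Finset (Fin m)) : Prop :=
  W.card = k ∧ ∀ c ∈ W, ∀ d : Fin m, d ∉ W →
    (avScore m n P d < avScore m n P c ∨ (avScore m n P d = avScore m n P c ∧ c < d))

/-- Approval Voting with lexicographic tie-breaking: selects the `k` candidates with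
highest approval score, breaking ties in favour of lexicographically smaller candidates. -/
noncomputable def AV (m n k : ℕ) (P : Fin n → Finset (Fin m)) : Finset (Fin m) :=
  if h : ∃ W, IsAVCommittee m n k P W then h.choose else ∅

/-- The harmonic number `H r = 1 + 1/2 + ⋯ + 1/r`, with `H 0 = 0`. -/
def harm : ℕ → ℚ
  | 0 => 0
  | r + 1 => harm r + 1 / (r + 1)

/-- The PAV score of committee `W` in profile `P`: `∑ᵢ H(|P i ∩ W|)`. -/
def pavScore (m n : ℕ) (P : Fin n → Finset (Fin m)) (W : Finset (Fin m)) : ℚ :=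
  ∑ i, harm ((P i ∩ W).card)

/-- Encoding used for lexicographic comparison of committees: a committee is
lexicographically earlier iff its encoding is larger. -/
def pavEncode (m : ℕ) (W : Finset (Fin m)) : ℕ :=
  ∑ c ∈ W, 2 ^ (m - 1 - (c : ℕ))

/-- `W` is the PAV winner: a size-`k` committee maximizing the PAV score, and the
lexicographically first among all such maximizers. -/
def IsPAVWinner (m n k : ℕ) (P : Fin n → Finset (Fin m)) (W : Finset (Fin m)) : Prop :=
  W.card = k ∧
  (∀ W' : Finset (Fin m), W'.card = k → pavScore m n P W' ≤ pavScore m n P W) ∧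
  (∀ W' : Finset (Fin m), W'.card = k → pavScore m n P W' = pavScore m n P W →
    pavEncode m W' ≤ pavEncode m W)

/-- Proportional Approval Voting, breaking ties by the lexicographically first optimum. -/
noncomputable def PAV (m n k : ℕ) (P : Fin n → Finset (Fin m)) : Finset (Fin m) :=
  if h : ∃ W, IsPAVWinner m n k P W then h.choose else ∅

/-- **Lemma 1.** Let `m = k + 1` and let `f` be a strategyproof and proportional
committee rule. If in the valid profile `P` the singleton ballot `{c}` is submitted by
at least `n/k` voters, and no other voter approves `c`, then `c ∈ f P`. -/
theorem singleton_approvers_lemma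
    (n k : ℕ) (hk : 1 ≤ k)
    (f : (Fin n → Finset (Fin (k + 1))) → Finset (Fin (k + 1)))
    (hf : IsCommitteeRule (k + 1) n k f)
    (hsp : Strategyproof (k + 1) n k f)
    (hprop : Proportional (k + 1) n k f)
    (P : Fin n → Finset (Fin (k + 1)))
    (hP : ValidProfile (k + 1) n k P)
    (c : Fin (k + 1))
    (hcount : n ≤ k * (Finset.univ.filter (fun i => P i = {c})).card)
    (hother : ∀ i : Fin n, P i ≠ {c} → c ∉ P i) :
    c ∈ f P := by
  classical
  set cp : Finset (Fin (k+1)) := Finset.univ \ {c} with hcp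
  have hccp : c ∉ cp := by simp [hcp]
  have hcp_card : cp.card = k := by
    rw [hcp, Finset.card_sdiff_of_subset (by simp), Finset.card_univ, Finset.card_singleton, Fintype.card_fin]
    omega
  have hcp_ne : cp ≠ Finset.univ := by
    intro h; exact hccp (h ▸ Finset.mem_univ c)
  have hcp_valid : ValidBallot (k+1) cp := by
    refine ⟨?_, hcp_ne⟩
    rw [← Finset.card_pos, hcp_card]; exact hk
  have hcp_ne_s : cp ≠ ({c} : Finset (Fin (k+1))) := fun h =>
    hccp (h ▸ Finset.mem_singleton_self c)
  set Q : Finset (Fin n) → Fin n → Finset (Fin (k+1)) :=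
    fun S i => if P i = {c} ∨ i ∈ S then P i else cp with hQ
  have hQvalid : ∀ S, ValidProfile (k+1) n k (Q S) := by
    intro S
    constructor
    · intro i; by_cases h : P i = {c} ∨ i ∈ S
      · simpa [hQ, h] using (hP.1 i)
      · simpa [hQ, h] using hcp_valid
    · by_cases h : ∃ i, ¬ (P i = {c} ∨ i ∈ S)
      · obtain ⟨i, hi⟩ := h
        calc k = cp.card := hcp_card.symm
        _ ≤ _ := Finset.card_le_card (fun x hx => Finset.mem_biUnion.2
            ⟨i, Finset.mem_univ i, by simpa [hQ, hi] using hx⟩)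
      · push_neg at h
        have hQP : Q S = P := funext (fun i => by simp [hQ, h i])
        rw [hQP]; exact hP.2
  have key : ∀ S : Finset (Fin n), c ∈ f (Q S) := by
    intro S
    induction S using Finset.induction_on with
    | empty =>
        refine hprop _ (hQvalid ∅) ?_ c ?_
        · intro i j
          by_cases hi : P i = {c} <;> by_cases hj : P j = {c}
          · left; simp [hQ, hi, hj]
          · right; simp [hQ, hi, hj, hcp, Finset.disjoint_left]
          · right; simp [hQ, hi, hj, hcp, Finset.disjoint_left]
          · left; simp [hQ, hi, hj]
        · have heq : (Finset.univ.filter (fun i => Q ∅ i = {c}))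
              = (Finset.univ.filter (fun i => P i = {c})) := by
            apply Finset.filter_congr
            intro i _
            by_cases h : P i = {c} <;> simp [hQ, h, hcp_ne_s]
          rw [heq]; exact hcount
    | @insert i S hiS ih =>
        by_cases h : P i = {c} ∨ P i = cp
        · have hQeq : Q (insert i S) = Q S := by
            funext j
            by_cases hji : j = i
            · subst hji
              rcases h with h | h <;> simp [hQ, h, hiS]
            · simp [hQ, Finset.mem_insert, hji]
          rw [hQeq]; exact ih
        · push_neg at h
          obtain ⟨h1, h2⟩ := h
          have hci : c ∉ P i := hother i h1
          have hsubcp : P i ⊆ cp := by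
            intro x hx
            simp only [hcp, Finset.mem_sdiff, Finset.mem_univ, true_and,
              Finset.mem_singleton]
            rintro rfl; exact hci hx
          have hssub : P i ⊂ cp := ⟨hsubcp, fun hh =>
            h2 (Finset.Subset.antisymm hsubcp hh)⟩
          have hQSi : Q S i = cp := by simp [hQ, h1, hiS]
          have hQSi' : Q (insert i S) i = P i := by simp [hQ]
          have hIV : IVariant (Q S) (Q (insert i S)) i := by
            intro j hji
            simp [hQ, Finset.mem_insert, hji]
          have hspec := hsp (Q S) (Q (insert i S)) i (hQvalid S)
            (hQvalid (insert i S)) hIV (by rw [hQSi', hQSi]; exact hssub)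
          rw [hQSi] at hspec
          by_contra hc
          -- f (Q (insert i S)) = cp
          have hcard' : (f (Q (insert i S))).card = k := hf _ (hQvalid (insert i S))
          have hsub' : f (Q (insert i S)) ⊆ cp := by
            intro x hx
            simp only [hcp, Finset.mem_sdiff, Finset.mem_univ, true_and,
              Finset.mem_singleton]
            rintro rfl; exact hc hx
          have heqcp : f (Q (insert i S)) = cp :=
            Finset.eq_of_subset_of_card_le hsub' (by rw [hcard', hcp_card])
          have hinter1 : f (Q (insert i S)) ∩ cp = cp := by
            rw [heqcp, Finset.inter_self]
          have hinter2 : f (Q S) ∩ cp = (f (Q S)).erase c := by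
            ext x
            simp only [Finset.mem_inter, hcp, Finset.mem_sdiff, Finset.mem_univ,
              true_and, Finset.mem_singleton, Finset.mem_erase]
            tauto
          have hcard2 : (f (Q S) ∩ cp).card < cp.card := by
            rw [hinter2, Finset.card_erase_of_mem ih, hf _ (hQvalid S), hcp_card]
            omega
          apply hspec
          rw [hinter1]
          exact ⟨Finset.inter_subset_right, fun hh =>
            absurd (Finset.card_le_card hh) (not_le.2 hcard2)⟩
  have hfinal : Q Finset.univ = P := by
    funext i; simp [hQ]
  have := key Finset.univ
  rwa [hfinal] at this
end

section
/- Suppose k ≥ 2, m = k+1, and let q ≥ 1 be an integer. If there exists a proportional and strategyproof committee rule for q·k voters (with m candidates and committee size k), then there also exists a proportional and strategyproof committee rule for k voters (with m candidates and committee size k). -/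
open scoped Classical

/-!
Clone every voter `q` times. Cloning preserves party lists and multiplies every ballot count
by `q`, so proportionality transfers. A single voter's deviation in the small profile becomes
`q` successive deviations of her clones, each harmless by strategyproofness. With `m = k + 1`
a committee of size `k` omits exactly one candidate `x`, and `W ∩ A = A.erase x`; then
"`W₂ ∩ A` is no strict gain over `W₁ ∩ A`" says `x₁ ∈ A → x₂ ∈ A`, a transitive relation, so
the `q` harmless steps compose to a harmless deviation.
-/

open Finset

theorem Finset.erase_ssubset_erase_iff {α : Type*} [DecidableEq α] {A : Finset α} {x y : α} :
    A.erase x ⊂ A.erase y ↔ x ∈ A ∧ y ∉ A := by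
  constructor
  · intro h
    have hcard := card_lt_card h
    by_cases hx : x ∈ A
    · refine ⟨hx, fun hy => ?_⟩
      rw [card_erase_of_mem hx, card_erase_of_mem hy] at hcard
      omega
    · rw [erase_eq_of_notMem hx] at hcard
      have := card_erase_le (s := A) (a := y)
      omega
  · rintro ⟨hx, hy⟩
    rw [erase_eq_of_notMem hy]
    exact erase_ssubset hx

section OneMissing

variable {α : Type*} [Fintype α] [DecidableEq α]

theorem Finset.exists_forall_inter_eq_erase {W : Finset α} (hW : W.card + 1 = Fintype.card α) :
    ∃ x, ∀ B : Finset α, W ∩ B = B.erase x := by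
  obtain ⟨x, hx⟩ := card_eq_one.mp (by rw [card_compl]; omega : Wᶜ.card = 1)
  refine ⟨x, fun B => ?_⟩
  ext c
  have hc : c ∈ W ↔ c ≠ x := by rw [← notMem_compl, hx, mem_singleton]
  simp [hc]

theorem not_inter_ssubset_trans {A W₁ W₂ W₃ : Finset α} (h₁ : W₁.card + 1 = Fintype.card α)
    (h₂ : W₂.card + 1 = Fintype.card α) (h₃ : W₃.card + 1 = Fintype.card α)
    (h₁₂ : ¬ W₁ ∩ A ⊂ W₂ ∩ A) (h₂₃ : ¬ W₂ ∩ A ⊂ W₃ ∩ A) : ¬ W₁ ∩ A ⊂ W₃ ∩ A := by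
  obtain ⟨x₁, e₁⟩ := exists_forall_inter_eq_erase h₁
  obtain ⟨x₂, e₂⟩ := exists_forall_inter_eq_erase h₂
  obtain ⟨x₃, e₃⟩ := exists_forall_inter_eq_erase h₃
  rw [e₁, e₂, erase_ssubset_erase_iff] at h₁₂
  rw [e₂, e₃, erase_ssubset_erase_iff] at h₂₃
  rw [e₁, e₃, erase_ssubset_erase_iff]
  tauto

theorem not_inter_ssubset_of_forall_lt {A : Finset α} {W : ℕ → Finset α}
    (hW : ∀ t, (W t).card + 1 = Fintype.card α) {q : ℕ}
    (hstep : ∀ t < q, ¬ W t ∩ A ⊂ W (t + 1) ∩ A) : ¬ W 0 ∩ A ⊂ W q ∩ A := by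
  induction q with
  | zero => exact ssubset_irrefl _
  | succ q ih =>
    exact not_inter_ssubset_trans (hW 0) (hW q) (hW (q + 1))
      (ih fun t ht => hstep t (by omega)) (hstep q (by omega))

end OneMissing

section Clones

variable {m n k q : ℕ}

/-- Voter `finProdFinEquiv (s, i)` is the `s`-th clone of voter `i`. -/
def cloneProfile (q : ℕ) (P : Fin n → Finset (Fin m)) : Fin (q * n) → Finset (Fin m) :=
  fun j => P (finProdFinEquiv.symm j).2

def mixedCloneProfile (q t : ℕ) (P P' : Fin n → Finset (Fin m)) :
    Fin (q * n) → Finset (Fin m) :=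
  fun j => if ((finProdFinEquiv.symm j).1 : ℕ) < t then P' (finProdFinEquiv.symm j).2
    else P (finProdFinEquiv.symm j).2

theorem card_filter_cloneProfile_eq (P : Fin n → Finset (Fin m)) (A : Finset (Fin m)) :
    #{j | cloneProfile q P j = A} = q * #{i | P i = A} := by
  have himage : ({j | cloneProfile q P j = A} : Finset (Fin (q * n)))
      = ((univ : Finset (Fin q)) ×ˢ ({i | P i = A} : Finset (Fin n))).map
          finProdFinEquiv.toEmbedding := by
    ext j
    simp [cloneProfile]
  rw [himage, card_map, card_product, card_univ, Fintype.card_fin]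

theorem biUnion_subset_biUnion_mixedCloneProfile (hq : 0 < q) (t : ℕ) (P P' : Fin n → Finset (Fin m)) :
    univ.biUnion (if 0 < t then P' else P) ⊆ univ.biUnion (mixedCloneProfile q t P P') := by
  intro c hc
  simp only [mem_biUnion, mem_univ, true_and] at hc ⊢
  obtain ⟨i, hi⟩ := hc
  refine ⟨finProdFinEquiv (⟨0, hq⟩, i), ?_⟩
  simp only [mixedCloneProfile, Equiv.symm_apply_apply]
  split_ifs at hi ⊢ <;> exact hi

theorem mixedCloneProfile_zero (P P' : Fin n → Finset (Fin m)) :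
    mixedCloneProfile q 0 P P' = cloneProfile q P := by
  funext j
  simp [mixedCloneProfile, cloneProfile]

theorem mixedCloneProfile_self (P P' : Fin n → Finset (Fin m)) :
    mixedCloneProfile q q P P' = cloneProfile q P' := by
  funext j
  simp only [mixedCloneProfile, cloneProfile, if_pos (finProdFinEquiv.symm j).1.isLt]

theorem ValidProfile.mixedCloneProfile {P P' : Fin n → Finset (Fin m)} (hP : ValidProfile m n k P)
    (hP' : ValidProfile m n k P') (hq : 0 < q) (t : ℕ) :
    ValidProfile m (q * n) k (mixedCloneProfile q t P P') := by
  refine ⟨fun j => ?_, ?_⟩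
  · unfold _root_.mixedCloneProfile
    split
    exacts [hP'.1 _, hP.1 _]
  · refine le_trans ?_ (card_le_card (biUnion_subset_biUnion_mixedCloneProfile hq t P P'))
    split
    exacts [hP'.2, hP.2]

theorem ValidProfile.cloneProfile {P : Fin n → Finset (Fin m)} (hP : ValidProfile m n k P)
    (hq : 0 < q) : ValidProfile m (q * n) k (cloneProfile q P) :=
  mixedCloneProfile_zero (q := q) P P ▸ hP.mixedCloneProfile hP hq 0

theorem PartyList.cloneProfile {P : Fin n → Finset (Fin m)} (hP : PartyList P) :
    PartyList (cloneProfile q P) :=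
  fun _ _ => hP _ _

section Step

variable {P P' : Fin n → Finset (Fin m)} {t : ℕ}

theorem mixedCloneProfile_ivariant_succ (ht : t < q) {i : Fin n} (hvar : IVariant P P' i) :
    IVariant (mixedCloneProfile q t P P') (mixedCloneProfile q (t + 1) P P')
      (finProdFinEquiv (⟨t, ht⟩, i)) := by
  intro j hj
  obtain ⟨⟨s, l⟩, rfl⟩ := finProdFinEquiv.surjective j
  have hne : (s : ℕ) ≠ t ∨ l ≠ i := by
    by_contra! h
    exact hj (congrArg _ (Prod.ext (Fin.ext h.1) h.2))
  simp only [mixedCloneProfile, Equiv.symm_apply_apply]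
  split_ifs <;> first | rfl | omega | exact hvar l (by omega)

theorem mixedCloneProfile_apply_clone (ht : t < q) (i : Fin n) :
    mixedCloneProfile q t P P' (finProdFinEquiv (⟨t, ht⟩, i)) = P i := by
  simp [mixedCloneProfile]

theorem mixedCloneProfile_succ_apply_clone (ht : t < q) (i : Fin n) :
    mixedCloneProfile q (t + 1) P P' (finProdFinEquiv (⟨t, ht⟩, i)) = P' i := by
  simp [mixedCloneProfile]

end Step

theorem IsCommitteeRule.comp_cloneProfile {f : (Fin (q * n) → Finset (Fin m)) → Finset (Fin m)}
    (hf : IsCommitteeRule m (q * n) k f) (hq : 0 < q) :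
    IsCommitteeRule m n k (fun P => f (cloneProfile q P)) :=
  fun _ hP => hf _ (hP.cloneProfile hq)

theorem Proportional.comp_cloneProfile {f : (Fin (q * n) → Finset (Fin m)) → Finset (Fin m)}
    (hf : Proportional m (q * n) k f) (hq : 0 < q) :
    Proportional m n k (fun P => f (cloneProfile q P)) := by
  intro P hP hPL c hc
  refine hf _ (hP.cloneProfile hq) hPL.cloneProfile c ?_
  rw [card_filter_cloneProfile_eq]
  calc q * n ≤ q * (k * #{i | P i = {c}}) := Nat.mul_le_mul_left q hc
    _ = k * (q * #{i | P i = {c}}) := Nat.mul_left_comm _ _ _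

theorem Strategyproof.comp_cloneProfile
    {f : (Fin (q * n) → Finset (Fin (k + 1))) → Finset (Fin (k + 1))}
    (hrule : IsCommitteeRule (k + 1) (q * n) k f) (hf : Strategyproof (k + 1) (q * n) k f)
    (hq : 0 < q) : Strategyproof (k + 1) n k (fun P => f (cloneProfile q P)) := by
  intro P P' i hP hP' hvar hsub
  have hvalid := hP.mixedCloneProfile hP' hq
  have hcard (t : ℕ) : (f (mixedCloneProfile q t P P')).card + 1 = Fintype.card (Fin (k + 1)) := by
    rw [hrule _ (hvalid t), Fintype.card_fin]
  have hstep : ∀ t < q, ¬ f (mixedCloneProfile q t P P') ∩ P i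
      ⊂ f (mixedCloneProfile q (t + 1) P P') ∩ P i := fun t ht => by
    have h := hf _ _ _ (hvalid t) (hvalid (t + 1)) (mixedCloneProfile_ivariant_succ ht hvar)
    rw [mixedCloneProfile_apply_clone ht i, mixedCloneProfile_succ_apply_clone ht i] at h
    exact h hsub
  simpa only [mixedCloneProfile_zero, mixedCloneProfile_self] using
    not_inter_ssubset_of_forall_lt hcard hstep

end Clones

theorem induction_step_n_general (k q : ℕ) (hq : 1 ≤ q) :
    (∃ f : (Fin (q * k) → Finset (Fin (k + 1))) → Finset (Fin (k + 1)),
        IsCommitteeRule (k + 1) (q * k) k f ∧ Proportional (k + 1) (q * k) k f ∧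
        Strategyproof (k + 1) (q * k) k f) →
    (∃ f : (Fin k → Finset (Fin (k + 1))) → Finset (Fin (k + 1)),
        IsCommitteeRule (k + 1) k k f ∧ Proportional (k + 1) k k f ∧
        Strategyproof (k + 1) k k f) := by
  rintro ⟨f, hrule, hprop, hsp⟩
  exact ⟨fun P => f (cloneProfile q P), hrule.comp_cloneProfile hq, hprop.comp_cloneProfile hq,
    hsp.comp_cloneProfile hrule hq⟩

/-- **Lemma 3 (induction step on `n`).** Suppose `k ≥ 2`, `m = k + 1`, and `q ≥ 1`.
If there exists a proportional and strategyproof committee rule for `q * k` voters,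
then there also exists such a rule for `k` voters. -/
theorem induction_step_n (k q : ℕ) (hk : 2 ≤ k) (hq : 1 ≤ q) :
    (∃ f : (Fin (q * k) → Finset (Fin (k + 1))) → Finset (Fin (k + 1)),
        IsCommitteeRule (k + 1) (q * k) k f ∧ Proportional (k + 1) (q * k) k f ∧
        Strategyproof (k + 1) (q * k) k f) →
    (∃ f : (Fin k → Finset (Fin (k + 1))) → Finset (Fin (k + 1)),
        IsCommitteeRule (k + 1) k k f ∧ Proportional (k + 1) k k f ∧
        Strategyproof (k + 1) k k f) :=
  induction_step_n_general k q hq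
end

section
/- Fix the number of voters n and the committee size k, and let m ≥ k. If there exists a weakly efficient, proportional, and strategyproof committee rule for m+1 candidates (with n voters and committee size k), then there also exists a weakly efficient, proportional, and strategyproof committee rule for m candidates (with n voters and committee size k). -/
open scoped Classical

/-!
Embed the `m` candidates into the `m + 1` candidates and run the larger rule on the embedded
profile. No voter approves the new candidate, so by weak efficiency the committee lies in the
image of the embedding and can be pulled back; all axioms transfer along the embedding.
-/

section RestrictRule

variable {m m' n k : ℕ} (e : Fin m ↪ Fin m')

def liftProfile (P : Fin n → Finset (Fin m)) : Fin n → Finset (Fin m') :=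
  fun i => (P i).map e

def restrictRule (f : (Fin n → Finset (Fin m')) → Finset (Fin m'))
    (P : Fin n → Finset (Fin m)) : Finset (Fin m) :=
  Finset.univ.filter fun c => e c ∈ f (liftProfile e P)

variable {e}

@[simp]
lemma mem_restrictRule {f : (Fin n → Finset (Fin m')) → Finset (Fin m')}
    {P : Fin n → Finset (Fin m)} {c : Fin m} :
    c ∈ restrictRule e f P ↔ e c ∈ f (liftProfile e P) := by
  simp [restrictRule]

lemma ValidBallot.map {A : Finset (Fin m)} (hA : ValidBallot m A) :
    ValidBallot m' (A.map e) := by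
  refine ⟨hA.1.map, fun h => hA.2 (Finset.eq_univ_iff_forall.2 fun c => ?_)⟩
  have hc : e c ∈ A.map e := h ▸ Finset.mem_univ (e c)
  simpa using hc

lemma biUnion_liftProfile (P : Fin n → Finset (Fin m)) :
    Finset.univ.biUnion (liftProfile e P) = (Finset.univ.biUnion P).map e := by
  ext x
  simp only [liftProfile, Finset.mem_biUnion, Finset.mem_univ, true_and, Finset.mem_map]
  tauto

lemma ValidProfile.lift {P : Fin n → Finset (Fin m)} (hP : ValidProfile m n k P) :
    ValidProfile m' n k (liftProfile e P) :=
  ⟨fun i => (hP.1 i).map, by rw [biUnion_liftProfile, Finset.card_map]; exact hP.2⟩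

lemma PartyList.lift {P : Fin n → Finset (Fin m)} (hP : PartyList P) :
    PartyList (liftProfile e P) := fun i j =>
  (hP i j).imp (congrArg (Finset.map e)) (Finset.disjoint_map e).2

lemma IVariant.lift {P P' : Fin n → Finset (Fin m)} {i : Fin n} (h : IVariant P P' i) :
    IVariant (liftProfile e P) (liftProfile e P') i := fun j hj => by
  simp only [liftProfile, h j hj]

lemma liftProfile_eq_singleton_iff {P : Fin n → Finset (Fin m)} {i : Fin n} {c : Fin m} :
    liftProfile e P i = {e c} ↔ P i = {c} := by
  rw [liftProfile, ← Finset.map_singleton e c, (Finset.map_injective e).eq_iff]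

lemma notMem_liftProfile_of_notMem_range {P : Fin n → Finset (Fin m)} {i : Fin n}
    {x : Fin m'} (hx : x ∉ Set.range e) : x ∉ liftProfile e P i := fun h => by
  obtain ⟨c, -, rfl⟩ := Finset.mem_map.1 h
  exact hx ⟨c, rfl⟩

variable {f : (Fin n → Finset (Fin m')) → Finset (Fin m')}

lemma WeakEfficiency.map_restrictRule (hf : WeakEfficiency m' n k f)
    {P : Fin n → Finset (Fin m)} (hP : ValidProfile m n k P) :
    (restrictRule e f P).map e = f (liftProfile e P) := by
  ext x
  by_cases hx : x ∈ Set.range e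
  · obtain ⟨c, rfl⟩ := hx
    simp
  · have hx' : x ∉ f (liftProfile e P) :=
      hf _ hP.lift x fun _ => notMem_liftProfile_of_notMem_range hx
    simp only [Finset.mem_map, mem_restrictRule, hx', iff_false, not_exists, not_and]
    exact fun c _ hc => hx ⟨c, hc⟩

lemma WeakEfficiency.restrict (hf : WeakEfficiency m' n k f) :
    WeakEfficiency m n k (restrictRule e f) := by
  intro P hP c hc
  rw [mem_restrictRule]
  exact hf _ hP.lift (e c) fun i => by simpa [liftProfile] using hc i

lemma IsCommitteeRule.restrict (hf : IsCommitteeRule m' n k f) (he : WeakEfficiency m' n k f) :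
    IsCommitteeRule m n k (restrictRule e f) := by
  intro P hP
  rw [← Finset.card_map e, he.map_restrictRule hP]
  exact hf _ hP.lift

lemma Proportional.restrict (hf : Proportional m' n k f) :
    Proportional m n k (restrictRule e f) := by
  intro P hP hPL c hc
  rw [mem_restrictRule]
  refine hf _ hP.lift hPL.lift (e c) ?_
  simpa only [liftProfile_eq_singleton_iff] using hc

lemma Strategyproof.restrict (hf : Strategyproof m' n k f) (he : WeakEfficiency m' n k f) :
    Strategyproof m n k (restrictRule e f) := by
  intro P P' i hP hP' hvar hsub hgain
  refine hf (liftProfile e P) (liftProfile e P') i hP.lift hP'.lift hvar.lift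
    (Finset.map_ssubset_map.2 hsub) ?_
  rw [← he.map_restrictRule hP, ← he.map_restrictRule hP', liftProfile,
    ← Finset.map_inter, ← Finset.map_inter, Finset.map_ssubset_map]
  exact hgain

end RestrictRule

theorem induction_step_m_general (n k m : ℕ) :
    (∃ f : (Fin n → Finset (Fin (m + 1))) → Finset (Fin (m + 1)),
        IsCommitteeRule (m + 1) n k f ∧ WeakEfficiency (m + 1) n k f ∧
        Proportional (m + 1) n k f ∧ Strategyproof (m + 1) n k f) →
    (∃ f : (Fin n → Finset (Fin m)) → Finset (Fin m),
        IsCommitteeRule m n k f ∧ WeakEfficiency m n k f ∧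
        Proportional m n k f ∧ Strategyproof m n k f) := by
  rintro ⟨f, hrule, heff, hprop, hsp⟩
  exact ⟨restrictRule Fin.castSuccEmb f, hrule.restrict heff, heff.restrict, hprop.restrict,
    hsp.restrict heff⟩

/-- **Lemma 4 (induction step on `m`).** Fix `n` and `k`, and let `m ≥ k`. If there
exists a weakly efficient, proportional, and strategyproof committee rule for `m + 1`
candidates, then there also exists such a rule for `m` candidates. -/
theorem induction_step_m (n k m : ℕ) (hm : k ≤ m) :
    (∃ f : (Fin n → Finset (Fin (m + 1))) → Finset (Fin (m + 1)),
        IsCommitteeRule (m + 1) n k f ∧ WeakEfficiency (m + 1) n k f ∧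
        Proportional (m + 1) n k f ∧ Strategyproof (m + 1) n k f) →
    (∃ f : (Fin n → Finset (Fin m)) → Finset (Fin m),
        IsCommitteeRule m n k f ∧ WeakEfficiency m n k f ∧
        Proportional m n k f ∧ Strategyproof m n k f) :=
  induction_step_m_general n k m
end

section
/- Let k ≥ 2. If there exists a proportional and strategyproof committee rule for committee size k+1, for k+1 voters, and for k+2 candidates, then there also exists a proportional and strategyproof committee rule for committee size k, for k voters, and for k+1 candidates. -/
open scoped Classical

/-!
Add a new candidate `x` and a new voter who approves only `x`. The big rule, applied to
such an extended profile, always elects `x`: otherwise it elects all old candidates, and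
letting the old voters switch one at a time to approving all old candidates keeps `x` out
by strategyproofness, until every old voter approves all old candidates and proportionality
forces `x` in. Hence dropping `x` from the committee of the extended profile gives a
committee rule one size smaller, which inherits proportionality and strategyproofness.
-/

namespace CommitteeReduction

open Finset

lemma mem_of_proportional_of_eq_singleton {m n k : ℕ}
    {f : (Fin n → Finset (Fin m)) → Finset (Fin m)} (hf : Proportional m n k f) (hnk : n ≤ k)
    {P : Fin n → Finset (Fin m)} (hP : ValidProfile m n k P) (hpl : PartyList P) {j : Fin n}
    {c : Fin m} (hj : P j = {c}) : c ∈ f P :=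
  hf P hP hpl c (hnk.trans (Nat.le_mul_of_pos_right k (card_pos.mpr ⟨j, by simp [hj]⟩)))

section Extension

variable {m n k : ℕ}

def liftBallot (A : Finset (Fin m)) : Finset (Fin (m + 1)) :=
  A.map Fin.castSuccEmb

def extendProfile (P : Fin n → Finset (Fin m)) : Fin (n + 1) → Finset (Fin (m + 1)) :=
  Fin.snoc (α := fun _ => Finset (Fin (m + 1))) (fun i => liftBallot (P i)) {Fin.last m}

@[simp]
lemma extendProfile_castSucc (P : Fin n → Finset (Fin m)) (i : Fin n) :
    extendProfile P i.castSucc = liftBallot (P i) :=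
  Fin.snoc_castSucc ..

@[simp]
lemma extendProfile_last (P : Fin n → Finset (Fin m)) :
    extendProfile P (Fin.last n) = {Fin.last m} :=
  Fin.snoc_last ..

lemma last_notMem_liftBallot (A : Finset (Fin m)) : Fin.last m ∉ liftBallot A := by
  simp [liftBallot, Fin.castSucc_ne_last]

lemma liftBallot_univ : liftBallot (univ : Finset (Fin m)) = univ.erase (Fin.last m) := by
  ext c
  induction c using Fin.lastCases <;> simp [liftBallot, Fin.castSucc_ne_last]

lemma liftBallot_ssubset_liftBallot {A B : Finset (Fin m)} :
    liftBallot A ⊂ liftBallot B ↔ A ⊂ B :=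
  map_ssubset_map

lemma liftBallot_inter (A B : Finset (Fin m)) :
    liftBallot (A ∩ B) = liftBallot A ∩ liftBallot B :=
  map_inter A B

lemma biUnion_extendProfile (P : Fin n → Finset (Fin m)) :
    univ.biUnion (extendProfile P) = insert (Fin.last m) (liftBallot (univ.biUnion P)) := by
  ext c
  simp only [mem_biUnion, mem_univ, true_and, Fin.exists_fin_succ', extendProfile_castSucc,
    extendProfile_last, mem_insert, mem_singleton, liftBallot, mem_map]
  aesop

lemma validProfile_extendProfile [NeZero m] {P : Fin n → Finset (Fin m)}
    (hP : ∀ i, (P i).Nonempty) (hk : k ≤ (univ.biUnion P).card) :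
    ValidProfile (m + 1) (n + 1) (k + 1) (extendProfile P) := by
  refine ⟨fun j => ?_, ?_⟩
  · induction j using Fin.lastCases with
    | last =>
      rw [extendProfile_last]
      refine ⟨singleton_nonempty _, fun h => ?_⟩
      exact Fin.castSucc_ne_last (0 : Fin m) (mem_singleton.mp (h ▸ mem_univ _))
    | cast i =>
      rw [extendProfile_castSucc]
      exact ⟨(hP i).map, fun h => last_notMem_liftBallot (P i) (h ▸ mem_univ _)⟩
  · rw [biUnion_extendProfile, card_insert_of_notMem (last_notMem_liftBallot _), liftBallot,
      card_map]
    omega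

lemma partyList_extendProfile {P : Fin n → Finset (Fin m)} (hP : PartyList P) :
    PartyList (extendProfile P) := by
  have disjoint_new (A : Finset (Fin m)) : Disjoint {Fin.last m} (liftBallot A) :=
    disjoint_singleton_left.mpr (last_notMem_liftBallot A)
  intro i j
  induction i using Fin.lastCases <;> induction j using Fin.lastCases
  case last.last => exact .inl rfl
  case last.cast j =>
    rw [extendProfile_last, extendProfile_castSucc]
    exact .inr (disjoint_new (P j))
  case cast.last i =>
    rw [extendProfile_last, extendProfile_castSucc]
    exact .inr (disjoint_new (P i)).symm
  case cast.cast i j =>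
    simp only [extendProfile_castSucc, liftBallot]
    exact (hP i j).imp (congrArg _) (disjoint_map _).mpr

lemma extendProfile_iVariant {P P' : Fin n → Finset (Fin m)} {i : Fin n}
    (h : IVariant P P' i) : IVariant (extendProfile P) (extendProfile P') i.castSucc := by
  intro j hj
  induction j using Fin.lastCases with
  | last => simp
  | cast j => simp [h j (fun hji => hj (hji ▸ rfl))]

end Extension

section ReducedRule

variable {m n k : ℕ}

def reducedRule (f : (Fin (n + 1) → Finset (Fin (m + 1))) → Finset (Fin (m + 1)))
    (P : Fin n → Finset (Fin m)) : Finset (Fin m) :=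
  univ.filter (fun c => c.castSucc ∈ f (extendProfile P))

variable (f : (Fin (n + 1) → Finset (Fin (m + 1))) → Finset (Fin (m + 1)))

lemma liftBallot_reducedRule (P : Fin n → Finset (Fin m)) :
    liftBallot (reducedRule f P) = (f (extendProfile P)).erase (Fin.last m) := by
  ext c
  induction c using Fin.lastCases <;> simp [liftBallot, reducedRule, Fin.castSucc_ne_last]

lemma liftBallot_reducedRule_inter (P : Fin n → Finset (Fin m)) (A : Finset (Fin m)) :
    liftBallot (reducedRule f P ∩ A) = f (extendProfile P) ∩ liftBallot A := by
  rw [liftBallot_inter, liftBallot_reducedRule, erase_inter, erase_eq_of_notMem]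
  exact fun h => last_notMem_liftBallot A (mem_inter.mp h).2

lemma isCommitteeRule_reducedRule [NeZero m] (hf : IsCommitteeRule (m + 1) (n + 1) (k + 1) f)
    (hlast : ∀ P, ValidProfile m n k P → Fin.last m ∈ f (extendProfile P)) :
    IsCommitteeRule m n k (reducedRule f) := by
  intro P hP
  rw [← card_map Fin.castSuccEmb, ← liftBallot, liftBallot_reducedRule,
    card_erase_of_mem (hlast P hP), hf _ (validProfile_extendProfile (fun i => (hP.1 i).1) hP.2)]
  rfl

lemma proportional_reducedRule [NeZero m] (hf : Proportional (m + 1) (n + 1) (k + 1) f)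
    (hn : 0 < n) (hnk : n ≤ k) : Proportional m n k (reducedRule f) := by
  intro P hP hpl c hc
  obtain ⟨j, hj⟩ : ∃ j, P j = {c} := by
    by_contra! h
    simp [filter_false_of_mem fun j _ => h j] at hc
    omega
  have hcj : extendProfile P j.castSucc = {c.castSucc} := by
    simp [hj, liftBallot]
  simpa [reducedRule] using mem_of_proportional_of_eq_singleton hf (by omega)
    (validProfile_extendProfile (fun i => (hP.1 i).1) hP.2) (partyList_extendProfile hpl) hcj

lemma strategyproof_reducedRule [NeZero m] (hf : Strategyproof (m + 1) (n + 1) (k + 1) f) :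
    Strategyproof m n k (reducedRule f) := by
  intro P P' i hP hP' hvar hsub hgain
  refine hf _ _ i.castSucc (validProfile_extendProfile (fun i => (hP.1 i).1) hP.2)
    (validProfile_extendProfile (fun i => (hP'.1 i).1) hP'.2) (extendProfile_iVariant hvar)
    (by simpa only [extendProfile_castSucc] using liftBallot_ssubset_liftBallot.mpr hsub) ?_
  rw [extendProfile_castSucc, ← liftBallot_reducedRule_inter, ← liftBallot_reducedRule_inter]
  exact liftBallot_ssubset_liftBallot.mpr hgain

end ReducedRule

section Saturation

variable {m n k : ℕ}

def saturateBelow (P : Fin n → Finset (Fin m)) (t : ℕ) : Fin n → Finset (Fin m) :=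
  fun i => if (i : ℕ) < t then univ else P i

@[simp]
lemma saturateBelow_zero (P : Fin n → Finset (Fin m)) : saturateBelow P 0 = P := by
  funext i
  simp [saturateBelow]

lemma partyList_saturateBelow_self (P : Fin n → Finset (Fin m)) :
    PartyList (saturateBelow P n) := by
  intro i j
  simp [saturateBelow]

lemma saturateBelow_iVariant (P : Fin n → Finset (Fin m)) {t : ℕ} (ht : t < n) :
    IVariant (saturateBelow P (t + 1)) (saturateBelow P t) ⟨t, ht⟩ := by
  intro j hj
  have : (j : ℕ) ≠ t := fun h => hj (Fin.ext h)
  simp only [saturateBelow]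
  split_ifs <;> first | rfl | omega

lemma validProfile_extendProfile_saturateBelow [NeZero m] {P : Fin n → Finset (Fin m)}
    (hP : ValidProfile m n k P) (t : ℕ) :
    ValidProfile (m + 1) (n + 1) (k + 1) (extendProfile (saturateBelow P t)) := by
  refine validProfile_extendProfile (fun i => ?_) (hP.2.trans (card_le_card ?_))
  · unfold saturateBelow
    split_ifs
    exacts [univ_nonempty, (hP.1 i).1]
  · refine biUnion_mono fun i _ => ?_
    unfold saturateBelow
    split_ifs
    exacts [subset_univ _, subset_rfl]

end Saturation

section NewCandidateElected

variable {n k : ℕ} {f : (Fin (n + 1) → Finset (Fin (k + 2))) → Finset (Fin (k + 2))}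

lemma eq_liftBallot_univ_of_last_notMem (hf : IsCommitteeRule (k + 2) (n + 1) (k + 1) f)
    {Q : Fin (n + 1) → Finset (Fin (k + 2))} (hQ : ValidProfile (k + 2) (n + 1) (k + 1) Q)
    (hlast : Fin.last (k + 1) ∉ f Q) : f Q = liftBallot univ := by
  refine eq_of_subset_of_card_le ?_ ?_
  · rw [liftBallot_univ]
    exact subset_erase.mpr ⟨subset_univ _, hlast⟩
  · rw [liftBallot, card_map, card_univ, Fintype.card_fin, hf Q hQ]

/-- If `x = Fin.last (k + 1)` is out, all old candidates are in; a voter approving all of them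
cannot gain by reporting her original ballot, so `x` stays out after she switches. -/
lemma last_notMem_saturateBelow_succ (hf : IsCommitteeRule (k + 2) (n + 1) (k + 1) f)
    (hsp : Strategyproof (k + 2) (n + 1) (k + 1) f) {P : Fin n → Finset (Fin (k + 1))}
    (hP : ValidProfile (k + 1) n k P) {t : ℕ} (ht : t < n)
    (hlast : Fin.last (k + 1) ∉ f (extendProfile (saturateBelow P t))) :
    Fin.last (k + 1) ∉ f (extendProfile (saturateBelow P (t + 1))) := by
  set i : Fin n := ⟨t, ht⟩
  have hbefore := eq_liftBallot_univ_of_last_notMem hf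
    (validProfile_extendProfile_saturateBelow hP t) hlast
  have hballot : extendProfile (saturateBelow P (t + 1)) i.castSucc = liftBallot univ := by
    rw [extendProfile_castSucc, saturateBelow, if_pos (Nat.lt_succ_self t)]
  have hdeviation : extendProfile (saturateBelow P t) i.castSucc ⊂
      extendProfile (saturateBelow P (t + 1)) i.castSucc := by
    rw [hballot, extendProfile_castSucc, liftBallot_ssubset_liftBallot, saturateBelow,
      if_neg (lt_irrefl t)]
    exact ssubset_univ_iff.mpr (hP.1 i).2
  have hno_gain := hsp _ _ i.castSucc (validProfile_extendProfile_saturateBelow hP (t + 1))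
    (validProfile_extendProfile_saturateBelow hP t)
    (extendProfile_iVariant (saturateBelow_iVariant P ht)) hdeviation
  rw [hballot, hbefore, inter_self, liftBallot_univ, inter_erase, inter_univ] at hno_gain
  intro hmem
  refine hno_gain <|
    Finset.ssubset_iff_subset_ne.mpr ⟨erase_subset_erase _ (subset_univ _), fun h => ?_⟩
  have hcard := congrArg card h
  rw [card_erase_of_mem hmem, card_erase_of_mem (mem_univ _), card_univ, Fintype.card_fin,
    hf _ (validProfile_extendProfile_saturateBelow hP (t + 1))] at hcard
  omega

lemma last_mem_extendProfile (hf : IsCommitteeRule (k + 2) (n + 1) (k + 1) f)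
    (hprop : Proportional (k + 2) (n + 1) (k + 1) f)
    (hsp : Strategyproof (k + 2) (n + 1) (k + 1) f) (hnk : n ≤ k)
    {P : Fin n → Finset (Fin (k + 1))} (hP : ValidProfile (k + 1) n k P) :
    Fin.last (k + 1) ∈ f (extendProfile P) := by
  by_contra hlast
  have hout : ∀ t ≤ n, Fin.last (k + 1) ∉ f (extendProfile (saturateBelow P t)) := by
    intro t ht
    induction t with
    | zero => simpa using hlast
    | succ t ih => exact last_notMem_saturateBelow_succ hf hsp hP ht (ih (by omega))
  exact hout n le_rfl <| mem_of_proportional_of_eq_singleton hprop (by omega)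
    (validProfile_extendProfile_saturateBelow hP n)
    (partyList_extendProfile (partyList_saturateBelow_self P)) (extendProfile_last _)

end NewCandidateElected

end CommitteeReduction

open CommitteeReduction in
/-- **Lemma 5 (induction step on `k`).** Let `k ≥ 2`. If there exists a proportional and
strategyproof committee rule for committee size `k + 1`, `k + 1` voters and `k + 2`
candidates, then there exists such a rule for committee size `k`, `k` voters and
`k + 1` candidates. -/
theorem induction_step_k (k : ℕ) (hk : 2 ≤ k) :
    (∃ f : (Fin (k + 1) → Finset (Fin (k + 2))) → Finset (Fin (k + 2)),
        IsCommitteeRule (k + 2) (k + 1) (k + 1) f ∧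
        Proportional (k + 2) (k + 1) (k + 1) f ∧
        Strategyproof (k + 2) (k + 1) (k + 1) f) →
    (∃ f : (Fin k → Finset (Fin (k + 1))) → Finset (Fin (k + 1)),
        IsCommitteeRule (k + 1) k k f ∧ Proportional (k + 1) k k f ∧
        Strategyproof (k + 1) k k f) := by
  rintro ⟨f, hrule, hprop, hsp⟩
  exact ⟨reducedRule f,
    isCommitteeRule_reducedRule f hrule
      fun _ hP => last_mem_extendProfile hrule hprop hsp le_rfl hP,
    proportional_reducedRule f hprop (by omega) le_rfl,
    strategyproof_reducedRule f hsp⟩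
end

section
/- For committee size k = 2, any number of candidates m ≥ 3, and any odd number n of voters, the Approval Voting rule AV satisfies justified representation (and in particular proportionality) and is cardinality-strategyproof. -/
open scoped Classical

section AVAux

private lemma nat_lex_lt {a b x y M : ℕ} (hx : x < M) (hy : y < M) :
    a * M + x < b * M + y ↔ (a < b ∨ (a = b ∧ x < y)) := by
  constructor
  · intro h
    rcases lt_trichotomy a b with h' | h' | h'
    · exact Or.inl h'
    · subst h'; exact Or.inr ⟨rfl, Nat.lt_of_add_lt_add_left h⟩
    · exfalso
      have h2 : b * M + M ≤ a * M := by
        calc b * M + M = (b + 1) * M := by ring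
          _ ≤ a * M := Nat.mul_le_mul h' (le_refl M)
      have h3 : b * M + y < a * M + x :=
        Nat.lt_of_lt_of_le (Nat.add_lt_add_left hy (b * M))
          (Nat.le_trans h2 (Nat.le_add_right _ x))
      exact Nat.lt_asymm h h3
  · rintro (h | ⟨rfl, h⟩)
    · have h2 : a * M + M ≤ b * M := by
        calc a * M + M = (a + 1) * M := by ring
          _ ≤ b * M := Nat.mul_le_mul h (le_refl M)
      exact Nat.lt_of_lt_of_le (Nat.add_lt_add_left hx _)
        (Nat.le_trans h2 (Nat.le_add_right _ y))
    · exact Nat.add_lt_add_left h _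

private lemma avScore_le (m n : ℕ) (P : Fin n → Finset (Fin m)) (c : Fin m) :
    avScore m n P c ≤ n := by
  have := Finset.card_filter_le (Finset.univ : Finset (Fin n)) (fun i => c ∈ P i)
  simpa [avScore] using this

/-- Key used for sorting candidates: smaller key = better (higher score, then smaller index). -/
private def avKey (m n : ℕ) (P : Fin n → Finset (Fin m)) (c : Fin m) : ℕ :=
  (n - avScore m n P c) * m + (c : ℕ)

private lemma avKey_lt_iff (m n : ℕ) (P : Fin n → Finset (Fin m)) (c d : Fin m) :
    avKey m n P c < avKey m n P d ↔
      (avScore m n P d < avScore m n P c ∨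
        (avScore m n P d = avScore m n P c ∧ c < d)) := by
  have h := nat_lex_lt (a := n - avScore m n P c) (b := n - avScore m n P d)
    (M := m) c.isLt d.isLt
  have hsc := avScore_le m n P c
  have hsd := avScore_le m n P d
  unfold avKey
  rw [h, Fin.lt_def]
  omega

private lemma avKey_inj (m n : ℕ) (P : Fin n → Finset (Fin m)) :
    Function.Injective (avKey m n P) := by
  intro c d h
  by_contra hne
  have h1 := avKey_lt_iff m n P c d
  have h2 := avKey_lt_iff m n P d c
  rcases lt_trichotomy c d with hcd | hcd | hcd
  · rcases lt_trichotomy (avScore m n P c) (avScore m n P d) with hs | hs | hs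
    · have := h2.mpr (Or.inl hs); omega
    · have := h1.mpr (Or.inr ⟨hs.symm, hcd⟩); omega
    · have := h1.mpr (Or.inl hs); omega
  · exact hne hcd
  · rcases lt_trichotomy (avScore m n P c) (avScore m n P d) with hs | hs | hs
    · have := h2.mpr (Or.inl hs); omega
    · have := h2.mpr (Or.inr ⟨hs, hcd⟩); omega
    · have := h1.mpr (Or.inl hs); omega

private lemma exists_top (m : ℕ) (key : Fin m → ℕ) (hinj : Function.Injective key) :
    ∀ k, k ≤ m → ∃ W : Finset (Fin m), W.card = k ∧
      ∀ c ∈ W, ∀ d, d ∉ W → key c < key d := by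
  intro k
  induction k with
  | zero => intro _; exact ⟨∅, rfl, by simp⟩
  | succ k ih =>
    intro hk
    obtain ⟨W, hWc, hW⟩ := ih (Nat.le_of_succ_le hk)
    have hne : (Wᶜ : Finset (Fin m)).Nonempty := by
      rw [← Finset.card_pos, Finset.card_compl, hWc]
      have hcard : Fintype.card (Fin m) = m := Fintype.card_fin m
      omega
    obtain ⟨c, hc, hmin⟩ := Finset.exists_min_image Wᶜ key hne
    refine ⟨insert c W, ?_, ?_⟩
    · rw [Finset.card_insert_of_notMem (by simpa using hc), hWc]
    · intro x hx d hd
      have hdW : d ∉ W := fun h => hd (Finset.mem_insert_of_mem h)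
      rcases Finset.mem_insert.mp hx with rfl | hxW
      · have h1 : key x ≤ key d := hmin d (Finset.mem_compl.mpr hdW)
        have hxd : x ≠ d := fun h => hd (h ▸ Finset.mem_insert_self x W)
        exact lt_of_le_of_ne h1 (fun h => hxd (hinj h))
      · exact hW x hxW d hdW

private lemma av_isAVCommittee (m n k : ℕ) (hk : k ≤ m) (P : Fin n → Finset (Fin m)) :
    IsAVCommittee m n k P (AV m n k P) := by
  obtain ⟨W, hWc, hW⟩ := exists_top m (avKey m n P) (avKey_inj m n P) k hk
  have hex : ∃ W, IsAVCommittee m n k P W :=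
    ⟨W, hWc, fun c hc d hd => (avKey_lt_iff m n P c d).mp (hW c hc d hd)⟩
  rw [AV, dif_pos hex]
  exact hex.choose_spec

end AVAux


/-- **Proposition (AV for k = 2 and odd n).** For committee size `k = 2`, any `m ≥ 3`,
and any odd number `n` of voters, Approval Voting satisfies justified representation
(and in particular proportionality) and is cardinality-strategyproof. -/
theorem av_jr_and_cardinality_strategyproof_k2_odd
    (m n : ℕ) (hm : 3 ≤ m) (hn : Odd n) :
    JR m n 2 (AV m n 2) ∧ Proportional m n 2 (AV m n 2) ∧
    CardinalityStrategyproof m n 2 (AV m n 2) := by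
  obtain ⟨t, ht⟩ := hn
  have hJR : JR m n 2 (AV m n 2) := by
    intro P hP N' hcard hc
    obtain ⟨c, hc⟩ := hc
    have hW : IsAVCommittee m n 2 P (AV m n 2 P) :=
      av_isAVCommittee m n 2 (by omega) P
    have hN' : N'.Nonempty := Finset.card_pos.mp (by omega)
    have hsc : N'.card ≤ avScore m n P c :=
      Finset.card_le_card (fun i hi => Finset.mem_filter.mpr ⟨Finset.mem_univ i, hc i hi⟩)
    by_cases hcW : c ∈ AV m n 2 P
    · obtain ⟨i, hi⟩ := hN'
      exact ⟨c, Finset.mem_inter.mpr ⟨hcW, Finset.mem_biUnion.mpr ⟨i, hi, hc i hi⟩⟩⟩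
    · obtain ⟨w, hwW⟩ : (AV m n 2 P).Nonempty := by
        rw [← Finset.card_pos, hW.1]; omega
      have hbeat := hW.2 w hwW c hcW
      have hsw : avScore m n P c ≤ avScore m n P w := by
        rcases hbeat with h | ⟨h, _⟩ <;> omega
      set S := Finset.univ.filter (fun i => w ∈ P i) with hS
      have hScard : S.card = avScore m n P w := rfl
      have h1 : (S ∪ N').card ≤ n := by
        have := Finset.card_le_univ (S ∪ N')
        simpa using this
      have h2 : (S ∪ N').card + (S ∩ N').card = S.card + N'.card :=
        Finset.card_union_add_card_inter S N'
      have hpos : 0 < (S ∩ N').card := by omega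
      obtain ⟨i, hi⟩ := Finset.card_pos.mp hpos
      rw [Finset.mem_inter] at hi
      exact ⟨w, Finset.mem_inter.mpr ⟨hwW,
        Finset.mem_biUnion.mpr ⟨i, hi.2, (Finset.mem_filter.mp hi.1).2⟩⟩⟩
  refine ⟨hJR, ?_, ?_⟩
  · -- Proportional
    intro P hP _ c hcard
    have hcomm : ∃ d : Fin m, ∀ i ∈ Finset.univ.filter (fun i => P i = {c}), d ∈ P i :=
      ⟨c, fun i hi => by
        rw [(Finset.mem_filter.mp hi).2]; exact Finset.mem_singleton_self c⟩
    obtain ⟨x, hx⟩ := hJR P hP (Finset.univ.filter (fun i => P i = {c})) hcard hcomm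
    rw [Finset.mem_inter] at hx
    obtain ⟨i, hi, hxi⟩ := Finset.mem_biUnion.mp hx.2
    have hPi : P i = {c} := (Finset.mem_filter.mp hi).2
    rw [hPi, Finset.mem_singleton] at hxi
    exact hxi ▸ hx.1
  · -- CardinalityStrategyproof
    intro P P' i _ _ hvar hlt
    have hW : IsAVCommittee m n 2 P (AV m n 2 P) := av_isAVCommittee m n 2 (by omega) P
    have hW' : IsAVCommittee m n 2 P' (AV m n 2 P') := av_isAVCommittee m n 2 (by omega) P'
    set W := AV m n 2 P with hWdef
    set W' := AV m n 2 P' with hW'def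
    have ha : ∃ a, a ∈ W' ∧ a ∈ P i ∧ a ∉ W := by
      by_contra hcon
      push_neg at hcon
      have hsub : W' ∩ P i ⊆ W ∩ P i := fun x hx => by
        rw [Finset.mem_inter] at hx ⊢
        exact ⟨hcon x hx.1 hx.2, hx.2⟩
      exact absurd (Finset.card_le_card hsub) (by omega)
    have hb : ∃ b, b ∈ W ∧ b ∉ P i ∧ b ∉ W' := by
      by_contra hcon
      push_neg at hcon
      have hsub : W \ P i ⊆ W' \ P i := fun x hx => by
        rw [Finset.mem_sdiff] at hx ⊢
        exact ⟨hcon x hx.1 hx.2, hx.2⟩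
      have e1 : (W \ P i).card + (W ∩ P i).card = W.card :=
        Finset.card_sdiff_add_card_inter W (P i)
      have e2 : (W' \ P i).card + (W' ∩ P i).card = W'.card :=
        Finset.card_sdiff_add_card_inter W' (P i)
      have := Finset.card_le_card hsub
      have hc1 := hW.1
      have hc2 := hW'.1
      omega
    obtain ⟨a, haW', haPi, haW⟩ := ha
    obtain ⟨b, hbW, hbPi, hbW'⟩ := hb
    have hsa : avScore m n P' a ≤ avScore m n P a := by
      apply Finset.card_le_card
      intro j hj
      rw [Finset.mem_filter] at hj ⊢
      refine ⟨Finset.mem_univ j, ?_⟩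
      by_cases hji : j = i
      · subst hji; exact haPi
      · rw [← hvar j hji]; exact hj.2
    have hsb : avScore m n P b ≤ avScore m n P' b := by
      apply Finset.card_le_card
      intro j hj
      rw [Finset.mem_filter] at hj ⊢
      refine ⟨Finset.mem_univ j, ?_⟩
      by_cases hji : j = i
      · exact absurd (hji ▸ hj.2) hbPi
      · rw [hvar j hji]; exact hj.2
    have h1 := hW.2 b hbW a haW
    have h2 := hW'.2 a haW' b hbW'
    rcases h1 with h1 | ⟨h1e, h1l⟩ <;> rcases h2 with h2 | ⟨h2e, h2l⟩
    · omega
    · omega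
    · omega
    · exact (lt_asymm h1l) h2l
end

section
/- Proportional Approval Voting is not strategyproof: for candidate set C = {a,b,c,d}, committee size k = 3, and n = 5 voters, in the profile P = ({a,b,c},{a,b,c},{a,b,c},{a,b,d},{a,b,d}) the unique PAV-score-maximizing committee is {a,b,c}, while in the 5-variant profile P' obtained by replacing voter 5's ballot {a,b,d} with {d} the unique PAV-score-maximizing committee is {a,b,d}; hence voter 5, by reporting the proper subset {d} of her truthful ballot, changes the PAV outcome from one containing two of her approved candidates to one containing all three, i.e., PAV(P') ∩ P(5) ⊋ PAV(P) ∩ P(5). -/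
open scoped Classical

/-- The truthful profile `(abc, abc, abc, abd, abd)` with `a,b,c,d = 0,1,2,3`. -/
def P13 : Fin 5 → Finset (Fin 4) := fun i =>
  if (i : ℕ) < 3 then {0, 1, 2} else {0, 1, 3}

/-- The 5-variant profile where voter 5 reports `{d}` instead of `{a,b,d}`. -/
def P13' : Fin 5 → Finset (Fin 4) := fun i =>
  if (i : ℕ) = 4 then {3} else P13 i

/-!
Swapping `c` for `d` in `{a,b,c}` costs each of the three `abc`-voters `1/3`. In `P` it gains
each of the two `abd`-voters only `1/3`, so `{a,b,c}` wins. After voter 5 reports `{d}` she no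
longer has `a` and `b` in the committee, so `d` is her first approved member and worth a full `1`
to her, which tips the balance to `{a,b,d}`. Committees missing `a` or `b` score lower in both.
-/

theorem PAV_eq_of_forall_pavScore_lt {m n k : ℕ} {P : Fin n → Finset (Fin m)}
    {W₀ : Finset (Fin m)} (hcard : W₀.card = k)
    (hlt : ∀ W, W.card = k → W ≠ W₀ → pavScore m n P W < pavScore m n P W₀) :
    PAV m n k P = W₀ := by
  have hwin : IsPAVWinner m n k P W₀ := by
    refine ⟨hcard, fun W hW => ?_, fun W hW heq => ?_⟩
    · rcases eq_or_ne W W₀ with rfl | hne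
      · exact le_rfl
      · exact (hlt W hW hne).le
    · rcases eq_or_ne W W₀ with rfl | hne
      · exact le_rfl
      · exact absurd heq (hlt W hW hne).ne
  have hex : ∃ W, IsPAVWinner m n k P W := ⟨W₀, hwin⟩
  rw [PAV, dif_pos hex]
  by_contra hne
  exact (hlt _ hex.choose_spec.1 hne).not_ge (hex.choose_spec.2.1 W₀ hcard)

theorem eq_or_eq_or_eq_or_eq_of_card_eq_three {W : Finset (Fin 4)} (h : W.card = 3) :
    W = {0, 1, 2} ∨ W = {0, 1, 3} ∨ W = {0, 2, 3} ∨ W = {1, 2, 3} := by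
  revert W
  decide

-- The scores of `abc, abd, acd, bcd` are `17/2, 49/6, 15/2, 15/2`.
theorem pavScore_P13_lt {W : Finset (Fin 4)} (hW : W.card = 3) (hne : W ≠ {0, 1, 2}) :
    pavScore 4 5 P13 W < pavScore 4 5 P13 {0, 1, 2} := by
  rcases eq_or_eq_or_eq_or_eq_of_card_eq_three hW with rfl | rfl | rfl | rfl <;>
    first
    | exact absurd rfl hne
    | norm_num +decide [pavScore, P13, Fin.sum_univ_five, harm]

-- The scores of `abc, abd, acd, bcd` are `7, 22/3, 7, 7`.
theorem pavScore_P13'_lt {W : Finset (Fin 4)} (hW : W.card = 3) (hne : W ≠ {0, 1, 3}) :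
    pavScore 4 5 P13' W < pavScore 4 5 P13' {0, 1, 3} := by
  rcases eq_or_eq_or_eq_or_eq_of_card_eq_three hW with rfl | rfl | rfl | rfl <;>
    first
    | exact absurd rfl hne
    | norm_num +decide [pavScore, P13', P13, Fin.sum_univ_five, harm]

/-- **PAV is not strategyproof.** For `C = {a,b,c,d}`, `k = 3` and `n = 5`: in
`P = (abc, abc, abc, abd, abd)` the unique PAV-score maximizer is `{a,b,c}`, while in
the 5-variant `P'` where voter 5 reports the proper subset `{d}` of her truthful ballot
`{a,b,d}`, the unique PAV-score maximizer is `{a,b,d}`; the new outcome intersected with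
voter 5's truthful ballot strictly contains the old one. -/
theorem pav_not_strategyproof :
    IVariant P13 P13' (4 : Fin 5) ∧ P13' 4 ⊂ P13 4 ∧
    (∀ W : Finset (Fin 4), W.card = 3 → W ≠ {0, 1, 2} →
      pavScore 4 5 P13 W < pavScore 4 5 P13 {0, 1, 2}) ∧
    (∀ W : Finset (Fin 4), W.card = 3 → W ≠ {0, 1, 3} →
      pavScore 4 5 P13' W < pavScore 4 5 P13' {0, 1, 3}) ∧
    (({0, 1, 2} : Finset (Fin 4)) ∩ P13 4 ⊂ ({0, 1, 3} : Finset (Fin 4)) ∩ P13 4) ∧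
    PAV 4 5 3 P13 ∩ P13 4 ⊂ PAV 4 5 3 P13' ∩ P13 4 := by
  have hP : PAV 4 5 3 P13 = {0, 1, 2} :=
    PAV_eq_of_forall_pavScore_lt (by decide) fun _ => pavScore_P13_lt
  have hP' : PAV 4 5 3 P13' = {0, 1, 3} :=
    PAV_eq_of_forall_pavScore_lt (by decide) fun _ => pavScore_P13'_lt
  refine ⟨by unfold IVariant; decide, by decide, fun _ => pavScore_P13_lt,
    fun _ => pavScore_P13'_lt, by decide, ?_⟩
  rw [hP, hP']
  decide
end
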